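/- For every m ≥ 1 and every k ≥ 0, the coefficient of x^k in B_m(x) equals ∑_{j=0}^{⌊m/2⌋} (−1)^j · C(m−j, j) · T(m−2j, k−2j) + ∑_{j=0}^{⌊(m−1)/2⌋} (−1)^j · C(m−j−1, j) · T(m−2j−1, k−2j−3), where C(a,b) is the binomial coefficient and T(n,i) denotes the coefficient of x^i in (1+x+x²)^n, with the convention that C(a,b) = 0 and T(n,i) = 0 whenever b < 0 or i < 0. -/
import Mathlib


open Polynomial Finset

/-- The rank generating function polynomials `B m` of the matchable Lucas cubes `Ω_{2m+1}`. -/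
noncomputable def B : ℕ → Polynomial ℤ
  | 0 => 1 + X
  | 1 => 1 + X + X ^ 2 + X ^ 3
  | 2 => 1 + 2 * X + 2 * X ^ 2 + 3 * X ^ 3 + 2 * X ^ 4 + X ^ 5
  | (m + 3) => (1 + X + X ^ 2) * B (m + 2) - X ^ 2 * B (m + 1)

/-- `C a b` : binomial coefficient with the convention `C a b = 0` for `b < 0`. -/
def C (a : ℕ) (b : ℤ) : ℤ := if 0 ≤ b then (a.choose b.toNat : ℤ) else 0

/-- `T n i` : the coefficient of `x^i` in `(1+x+x²)^n`, with `T n i = 0` for `i < 0`. -/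
noncomputable def T (n : ℕ) (i : ℤ) : ℤ :=
  if 0 ≤ i then ((1 + X + X ^ 2 : Polynomial ℤ) ^ n).coeff i.toNat else 0

noncomputable def cz (q : Polynomial ℤ) (i : ℤ) : ℤ :=
  if 0 ≤ i then q.coeff i.toNat else 0

lemma cz_add (q r : Polynomial ℤ) (i : ℤ) : cz (q + r) i = cz q i + cz r i := by
  unfold cz; split <;> simp

lemma cz_sub (q r : Polynomial ℤ) (i : ℤ) : cz (q - r) i = cz q i - cz r i := by
  unfold cz; split <;> simp

lemma cz_X_pow_mul (s : ℕ) (q : Polynomial ℤ) (i : ℤ) :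
    cz (X ^ s * q) i = cz q (i - s) := by
  unfold cz
  rw [Polynomial.X_pow_mul, Polynomial.coeff_mul_X_pow']
  by_cases h : 0 ≤ i
  · by_cases h2 : (s : ℤ) ≤ i
    · rw [if_pos h, if_pos (by omega : 0 ≤ i - s), if_pos (by omega : s ≤ i.toNat)]
      congr 1; omega
    · rw [if_pos h, if_neg (by omega : ¬ (0 : ℤ) ≤ i - s), if_neg (by omega : ¬ s ≤ i.toNat)]
  · rw [if_neg h, if_neg (by omega : ¬ (0 : ℤ) ≤ i - s)]

lemma cz_p_mul (q : Polynomial ℤ) (i : ℤ) :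
    cz ((1 + X + X ^ 2) * q) i = cz q i + cz q (i - 1) + cz q (i - 2) := by
  have h : (1 + X + X ^ 2) * q = q + X ^ 1 * q + X ^ 2 * q := by ring
  rw [h, cz_add, cz_add, cz_X_pow_mul, cz_X_pow_mul]
  norm_num

/-- integer-indexed trinomial coefficients -/
noncomputable def t (n i : ℤ) : ℤ :=
  if 0 ≤ n then cz ((1 + X + X ^ 2 : Polynomial ℤ) ^ n.toNat) i else 0

lemma t_cast (n : ℕ) (i : ℤ) : t n i = T n i := by
  unfold t cz T
  rw [if_pos (by positivity : (0:ℤ) ≤ (n:ℤ))]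
  simp

lemma t_neg (n i : ℤ) (h : i < 0) : t n i = 0 := by
  unfold t cz
  rw [if_neg (by omega : ¬ 0 ≤ i)]
  split <;> rfl

lemma t_rec (n : ℤ) (hn : 0 ≤ n) (i : ℤ) :
    t (n + 1) i = t n i + t n (i - 1) + t n (i - 2) := by
  unfold t
  rw [if_pos (by omega : (0:ℤ) ≤ n + 1), if_pos hn, if_pos hn, if_pos hn]
  have h1 : (n + 1).toNat = n.toNat + 1 := by omega
  rw [h1, pow_succ, mul_comm, cz_p_mul]

/-- integer-indexed binomial coefficients -/
def c' (n k : ℤ) : ℤ :=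
  if 0 ≤ n ∧ 0 ≤ k ∧ k ≤ n then (n.toNat.choose k.toNat : ℤ) else 0

lemma c'_eq_zero {n k : ℤ} (h : ¬(0 ≤ n ∧ 0 ≤ k ∧ k ≤ n)) : c' n k = 0 := if_neg h

lemma c'_val {n k : ℤ} (hn : 0 ≤ n) (hk : 0 ≤ k) :
    c' n k = (n.toNat.choose k.toNat : ℤ) := by
  by_cases h : k ≤ n
  · exact if_pos ⟨hn, hk, h⟩
  · rw [c'_eq_zero (by tauto), Nat.choose_eq_zero_of_lt (by omega)]; rfl

lemma c'_cast (a : ℕ) (b : ℤ) : c' a b = C a b := by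
  by_cases hb : 0 ≤ b
  · rw [c'_val (by positivity) hb, _root_.C, if_pos hb, Int.toNat_natCast]
  · rw [c'_eq_zero (by tauto), _root_.C, if_neg hb]

lemma c'_pascal (n k : ℤ) (h : 1 ≤ n ∨ 1 ≤ k) :
    c' n k = c' (n - 1) k + c' (n - 1) (k - 1) := by
  rcases lt_trichotomy k 0 with hk | hk | hk
  · rw [c'_eq_zero (by omega), c'_eq_zero (by omega), c'_eq_zero (by omega)]; ring
  · subst hk
    have hn : 1 ≤ n := by omega
    rw [c'_val (by omega) le_rfl, c'_val (by omega) le_rfl,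
      c'_eq_zero (by omega)]
    simp
  · by_cases hn : 1 ≤ n
    · rw [c'_val (by omega) (by omega), c'_val (by omega) (by omega),
        c'_val (by omega) (by omega)]
      have h1 : n.toNat = (n - 1).toNat + 1 := by omega
      have h2 : k.toNat = (k - 1).toNat + 1 := by omega
      rw [h1, h2, Nat.choose_succ_succ]
      push_cast; ring
    · rw [c'_eq_zero (by omega), c'_eq_zero (by omega), c'_eq_zero (by omega)]; ring

noncomputable def Gp : ℕ → Polynomial ℤ
  | 0 => 1
  | 1 => 1 + X + X ^ 2
  | (m + 2) => (1 + X + X ^ 2) * Gp (m + 1) - X ^ 2 * Gp m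

theorem B_decomp : ∀ m : ℕ, B (m + 1) = Gp (m + 1) + X ^ 3 * Gp m
  | 0 => by show B 1 = _; rw [B, Gp, Gp]; ring
  | 1 => by
      show B 2 = _
      rw [B, show Gp 2 = (1 + X + X ^ 2) * Gp 1 - X ^ 2 * Gp 0 from rfl, Gp, Gp]; ring
  | (m + 2) => by
      have h1 := B_decomp (m + 1)
      have h2 := B_decomp m
      show B (m + 3) = _
      rw [show B (m + 3) = (1 + X + X ^ 2) * B (m + 2) - X ^ 2 * B (m + 1) from rfl,
        h1, h2, show Gp (m + 3) = (1 + X + X ^ 2) * Gp (m + 2) - X ^ 2 * Gp (m + 1) from rfl,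
        show Gp (m + 2) = (1 + X + X ^ 2) * Gp (m + 1) - X ^ 2 * Gp m from rfl]
      ring


noncomputable def g (m : ℕ) (k : ℤ) : ℤ :=
  ∑ j ∈ Finset.range (m + 1), (-1 : ℤ) ^ j * c' ((m : ℤ) - j) j * t ((m : ℤ) - 2 * j) (k - 2 * j)

lemma g_ext (m M : ℕ) (h : m ≤ M) (k : ℤ) :
    g m k = ∑ j ∈ Finset.range (M + 1),
      (-1 : ℤ) ^ j * c' ((m : ℤ) - j) j * t ((m : ℤ) - 2 * j) (k - 2 * j) := by
  apply Finset.sum_subset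
  · exact Finset.range_subset_range.2 (by omega)
  · intro j hj hj2
    simp only [Finset.mem_range] at hj hj2
    rw [c'_eq_zero (by push_neg; intro h1; omega)]
    ring

lemma g_rec (m : ℕ) (k : ℤ) :
    g (m + 2) k = g (m + 1) k + g (m + 1) (k - 1) + g (m + 1) (k - 2) - g m (k - 2) := by
  have key : ∀ j : ℕ,
      (-1 : ℤ) ^ j * c' ((m : ℤ) + 2 - j) j * t ((m : ℤ) + 2 - 2 * j) (k - 2 * j)
        = ((-1 : ℤ) ^ j * c' ((m : ℤ) + 1 - j) j * t ((m : ℤ) + 1 - 2 * j) (k - 2 * j)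
          + (-1 : ℤ) ^ j * c' ((m : ℤ) + 1 - j) j * t ((m : ℤ) + 1 - 2 * j) (k - 1 - 2 * j)
          + (-1 : ℤ) ^ j * c' ((m : ℤ) + 1 - j) j * t ((m : ℤ) + 1 - 2 * j) (k - 2 - 2 * j))
          + (-1 : ℤ) ^ j * c' ((m : ℤ) + 1 - j) ((j : ℤ) - 1) * t ((m : ℤ) + 2 - 2 * j) (k - 2 * j) := by
    intro j
    have pas : c' ((m : ℤ) + 2 - j) j = c' ((m : ℤ) + 1 - j) j + c' ((m : ℤ) + 1 - j) ((j : ℤ) - 1) := by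
      have := c'_pascal ((m : ℤ) + 2 - j) j (by omega)
      rw [this]; congr 1 <;> congr 1 <;> ring
    rw [pas]
    by_cases hc : c' ((m : ℤ) + 1 - j) (j : ℤ) = 0
    · rw [hc]; ring
    · have hj : (0 : ℤ) ≤ (m : ℤ) + 1 - j ∧ (0 : ℤ) ≤ (j : ℤ) ∧ (j : ℤ) ≤ (m : ℤ) + 1 - j := by
        by_contra h; exact hc (c'_eq_zero h)
      have h2 : (0 : ℤ) ≤ (m : ℤ) + 1 - 2 * j := by omega
      have := t_rec ((m : ℤ) + 1 - 2 * j) h2 (k - 2 * j)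
      rw [show (m : ℤ) + 2 - 2 * j = ((m : ℤ) + 1 - 2 * j) + 1 by ring, this,
        show k - 2 * j - 1 = k - 1 - 2 * j by ring,
        show k - 2 * j - 2 = k - 2 - 2 * j by ring]
      ring
  have e0 : g (m + 2) k = ∑ j ∈ Finset.range (m + 4),
      (-1 : ℤ) ^ j * c' ((m : ℤ) + 2 - j) j * t ((m : ℤ) + 2 - 2 * j) (k - 2 * j) := by
    rw [g_ext (m + 2) (m + 3) (by omega)]
    push_cast
    rfl
  have e1 : ∀ i : ℤ, g (m + 1) i = ∑ j ∈ Finset.range (m + 4),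
      (-1 : ℤ) ^ j * c' ((m : ℤ) + 1 - j) j * t ((m : ℤ) + 1 - 2 * j) (i - 2 * j) := by
    intro i
    rw [g_ext (m + 1) (m + 3) (by omega)]
    push_cast
    rfl
  have e2 : ∑ j ∈ Finset.range (m + 4),
      (-1 : ℤ) ^ j * c' ((m : ℤ) + 1 - j) ((j : ℤ) - 1) * t ((m : ℤ) + 2 - 2 * j) (k - 2 * j)
      = - g m (k - 2) := by
    rw [Finset.sum_range_succ']
    rw [g_ext m (m + 2) (by omega), ← Finset.sum_neg_distrib]
    have h0 : (-1 : ℤ) ^ (0:ℕ) * c' ((m : ℤ) + 1 - ((0:ℕ):ℤ)) (((0:ℕ):ℤ) - 1) * t ((m : ℤ) + 2 - 2 * ((0:ℕ):ℤ)) (k - 2 * ((0:ℕ):ℤ)) = 0 := by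
      rw [c'_eq_zero (by intro h; push_cast at h; exact h.2.1)]; ring
    rw [h0, add_zero]
    apply Finset.sum_congr rfl
    intro j _
    push_cast
    rw [show (m : ℤ) + 1 - (j + 1) = (m : ℤ) - j by ring,
      show (j : ℤ) + 1 - 1 = (j : ℤ) by ring,
      show (m : ℤ) + 2 - 2 * (j + 1) = (m : ℤ) - 2 * j by ring,
      show k - 2 * ((j : ℤ) + 1) = k - 2 - 2 * j by ring, pow_succ]
    ring
  rw [e0, e1 k, e1 (k - 1), e1 (k - 2), Finset.sum_congr rfl (fun j _ => key j),
    Finset.sum_add_distrib, Finset.sum_add_distrib, Finset.sum_add_distrib, e2]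
  ring

lemma cz_Gp (m : ℕ) : ∀ k : ℤ, cz (Gp m) k = g m k := by
  induction m using Nat.strong_induction_on with
  | _ m ih =>
    match m with
    | 0 => intro k
           show cz (Gp 0) k = _
           rw [Gp]
           simp only [g, Finset.sum_range_one, c', t]
           norm_num
    | 1 => intro k
           show cz (Gp 1) k = _
           rw [Gp]
           simp only [g, Finset.sum_range_succ, Finset.sum_range_one, c', t]
           norm_num
    | (n + 2) =>
      intro k
      rw [show Gp (n + 2) = (1 + X + X ^ 2) * Gp (n + 1) - X ^ 2 * Gp n from rfl,
        cz_sub, cz_p_mul, cz_X_pow_mul, ih (n + 1) (by omega), ih (n + 1) (by omega),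
        ih (n + 1) (by omega), ih n (by omega), g_rec]
      norm_num

lemma cz_natCast (q : Polynomial ℤ) (k : ℕ) : cz q (k : ℤ) = q.coeff k := by
  unfold cz
  rw [if_pos (Int.natCast_nonneg k)]
  simp

lemma g_eq (n : ℕ) (i : ℤ) :
    g n i = ∑ j ∈ Finset.range (n / 2 + 1),
      (-1 : ℤ) ^ j * C (n - j) (j : ℤ) * T (n - 2 * j) (i - 2 * j) := by
  unfold g
  rw [← Finset.sum_subset (Finset.range_subset_range.2 (by omega : n / 2 + 1 ≤ n + 1))]
  · apply Finset.sum_congr rfl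
    intro j hj
    simp only [Finset.mem_range] at hj
    have hj2 : 2 * j ≤ n := by omega
    rw [show ((n : ℤ) - j) = ((n - j : ℕ) : ℤ) by omega, c'_cast,
      show ((n : ℤ) - 2 * j) = ((n - 2 * j : ℕ) : ℤ) by omega, t_cast]
  · intro j hj hj2
    simp only [Finset.mem_range] at hj hj2
    rw [c'_eq_zero (by intro h; omega)]
    ring

theorem coeff_B (m : ℕ) (hm : 1 ≤ m) (k : ℕ) :
    (B m).coeff k
      = ∑ j ∈ Finset.range (m / 2 + 1),
          (-1 : ℤ) ^ j * C (m - j) (j : ℤ) * T (m - 2 * j) ((k : ℤ) - 2 * j)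
        + ∑ j ∈ Finset.range ((m - 1) / 2 + 1),
            (-1 : ℤ) ^ j * C (m - j - 1) (j : ℤ)
              * T (m - 2 * j - 1) ((k : ℤ) - 2 * j - 3) := by
  obtain ⟨n, rfl⟩ : ∃ n, m = n + 1 := ⟨m - 1, by omega⟩
  have h1 : (B (n + 1)).coeff k = g (n + 1) (k : ℤ) + g n ((k : ℤ) - 3) := by
    rw [← cz_natCast, B_decomp n, cz_add, cz_X_pow_mul, cz_Gp, cz_Gp]
    norm_num
  rw [h1, g_eq (n + 1) (k : ℤ), g_eq n ((k : ℤ) - 3)]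
  congr 1
  have hr : n + 1 - 1 = n := rfl
  rw [hr]
  apply Finset.sum_congr rfl
  intro j hj
  simp only [Finset.mem_range] at hj
  rw [show n + 1 - j - 1 = n - j by omega, show n + 1 - 2 * j - 1 = n - 2 * j by omega,
    show (k : ℤ) - 2 * j - 3 = ((k : ℤ) - 3) - 2 * j by ring]
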